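/- arXiv:1710.05665 — 3 statements merged into one kernel-verified Lean document; each statement's English description precedes it below -/
import Mathlib

section
/- Let a ∈ H_R be invertible with inverse b. Then for all n ≥ 0, b_n = n! · B_n(g_0, g_1, ..., g_n) / a_0, where g_n = -a_{n+1}/(a_0 (n+1)!) and B_n denotes the complete ordinary Bell polynomial. -/
open Finset PowerSeries

variable {R : Type*} [CommRing R] [Algebra ℚ R]

/-- Binomial convolution of sequences. -/
def bconv (a b : ℕ → R) : ℕ → R :=
  fun n => ∑ h ∈ range (n + 1), (n.choose h : R) * a h * b (n - h)

/-- The identity sequence (1,0,0,...). -/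
def eseq : ℕ → R := fun n => if n = 0 then 1 else 0

/-- Partial ordinary Bell polynomial `B_{n,k}(x₁,x₂,…)`, for a sequence `x` indexed
from 1, defined as the coefficient of `z^n` in `(∑_{m≥1} x_m z^m)^k`. -/
noncomputable def pBell (n k : ℕ) (x : ℕ → R) : R :=
  PowerSeries.coeff (R := R) n ((PowerSeries.mk fun m => if m = 0 then 0 else x m) ^ k)

/-- Complete ordinary Bell polynomial `B_n(x₁,x₂,…)`. -/
noncomputable def cBell (n : ℕ) (x : ℕ → R) : R :=
  if n = 0 then 1 else ∑ k ∈ Icc 1 n, pBell n k x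

/-!
Under `a ↦ ∑ aₙ zⁿ / n!` binomial convolution becomes multiplication of power series, so
`egf a * egf b = 1`. With `F = ∑_{m ≥ 1} g_{m-1} zᵐ` the choice of `g` makes `a0⁻¹ · egf a = 1 - F`,
hence `a 0 · egf b` is the inverse of `1 - F`. As `F` has no constant term, the `n`-th
coefficient of this inverse is that of the truncated geometric series `∑_{k ≤ n} Fᵏ`, which is
`B_n(g₀, g₁, …)`.
-/

section GeometricSeries

variable {S : Type*} [CommRing S]

theorem PowerSeries.coeff_eq_coeff_geom_sum_of_mul_eq_one {F G : S⟦X⟧}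
    (hF : constantCoeff F = 0) (hG : (1 - F) * G = 1) (n : ℕ) :
    coeff n G = coeff n (∑ k ∈ range (n + 1), F ^ k) := by
  have hdiff : G - ∑ k ∈ range (n + 1), F ^ k = G * F ^ (n + 1) := by
    have hgeom : (1 - F) * ∑ k ∈ range (n + 1), F ^ k = 1 - F ^ (n + 1) := by
      rw [mul_comm, ← neg_sub F, mul_neg, geom_sum_mul]
      ring
    linear_combination (∑ k ∈ range (n + 1), F ^ k) * hG - G * hgeom
  have hX : X ^ (n + 1) ∣ G * F ^ (n + 1) :=
    (pow_dvd_pow_of_dvd (X_dvd_iff.mpr hF) _).mul_left G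
  rw [← sub_eq_zero, ← map_sub, hdiff]
  exact X_pow_dvd_iff.mp hX n n.lt_succ_self

theorem cBell_eq_coeff_geom_sum (n : ℕ) (x : ℕ → S) :
    cBell n x = coeff n (∑ k ∈ range (n + 1), (mk fun m => if m = 0 then 0 else x m) ^ k) := by
  rcases n.eq_zero_or_pos with rfl | hn
  · simp [cBell]
  · rw [cBell, if_neg hn.ne', map_sum, sum_range_eq_add_Ico _ (Nat.add_one_pos n),
      Ico_add_one_right_eq_Icc, pow_zero, coeff_one, if_neg hn.ne', zero_add]
    rfl

end GeometricSeries

noncomputable def egf (a : ℕ → R) : R⟦X⟧ :=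
  mk fun n => algebraMap ℚ R (1 / n.factorial) * a n

theorem coeff_egf (a : ℕ → R) (n : ℕ) :
    coeff n (egf a) = algebraMap ℚ R (1 / n.factorial) * a n :=
  coeff_mk _ _

theorem egf_eseq : egf (eseq : ℕ → R) = 1 := by
  ext n
  rcases n with _ | n <;> simp [coeff_egf, eseq, coeff_one]

theorem one_div_factorial_mul_choose (i j : ℕ) :
    (1 / (i + j).factorial : ℚ) * (i + j).choose i = 1 / i.factorial * (1 / j.factorial) := by
  rw [Nat.cast_add_choose]
  field_simp

theorem egf_bconv (a b : ℕ → R) : egf (bconv a b) = egf a * egf b := by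
  ext n
  rw [coeff_mul, Nat.sum_antidiagonal_eq_sum_range_succ_mk, coeff_egf, bconv, mul_sum]
  refine sum_congr rfl fun i hi => ?_
  obtain ⟨j, rfl⟩ := Nat.exists_eq_add_of_le (Nat.lt_succ_iff.mp (mem_range.mp hi))
  have hfac := congrArg (algebraMap ℚ R) (one_div_factorial_mul_choose i j)
  simp only [map_mul, map_natCast] at hfac
  simp only [coeff_egf, Nat.add_sub_cancel_left]
  linear_combination (a i * b j) * hfac

theorem natCast_factorial_mul_algebraMap_one_div (n : ℕ) :
    (n.factorial : R) * algebraMap ℚ R (1 / n.factorial) = 1 := by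
  rw [← map_natCast (algebraMap ℚ R), ← map_mul, mul_one_div_cancel (by positivity), map_one]

/-- If `b = a⁻¹` in the Hurwitz ring, then
`b n = n! ⬝ B_n(g₀,…,g_{n-1... n}) / a 0`, where `g m = -a (m+1) / (a 0 · (m+1)!)`. -/
theorem hurwitz_inverse_bell (a b : ℕ → R) (a0inv : R)
    (ha0 : a 0 * a0inv = 1) (hab : bconv a b = eseq)
    (g : ℕ → R)
    (hg : ∀ m : ℕ, g m = -(a (m + 1)) * a0inv * algebraMap ℚ R (1 / (m + 1).factorial)) :
    ∀ n : ℕ, b n = (n.factorial : R) * cBell n (fun i => g (i - 1)) * a0inv := by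
  intro n
  set F : R⟦X⟧ := mk fun m => if m = 0 then 0 else g (m - 1) with hF
  have hF0 : constantCoeff F = 0 := by simp [hF]
  have hnormalized : C a0inv * egf a = 1 - F := by
    ext (_ | m)
    · simp [hF, coeff_egf, mul_comm a0inv, ha0]
    · simp only [coeff_C_mul, coeff_egf, map_sub, coeff_one, hF, coeff_mk, hg,
        Nat.add_one_ne_zero, if_false, Nat.add_sub_cancel, zero_sub]
      ring
  have hinv : (1 - F) * (C (a 0) * egf b) = 1 := by
    rw [← hnormalized, mul_mul_mul_comm, ← map_mul, mul_comm a0inv, ha0, map_one, one_mul,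
      ← egf_bconv, hab, egf_eseq]
  have hcoeff := PowerSeries.coeff_eq_coeff_geom_sum_of_mul_eq_one hF0 hinv n
  rw [← cBell_eq_coeff_geom_sum, coeff_C_mul, coeff_egf] at hcoeff
  calc b n = (n.factorial * algebraMap ℚ R (1 / n.factorial)) * b n * (a 0 * a0inv) := by
        rw [natCast_factorial_mul_algebraMap_one_div, ha0, one_mul, mul_one]
    _ = n.factorial * cBell n (fun i => g (i - 1)) * a0inv := by
        rw [← hcoeff]
        ring
end

section
/- If g ∈ H_R and h is the Invert transform of g, then for all n ≥ 0, h_n = B_{n+1}(g_0, g_1, ..., g_n), the complete ordinary Bell polynomial evaluated at the terms of g. -/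
open Finset PowerSeries

variable {R : Type*} [CommRing R]

/-! Writing `F = t·G` and `H = t·Σ hₙtⁿ`, the Invert relation becomes `H = F + F·H`. Unfolding it
`m` times gives `H = F + F² + ⋯ + Fᵐ + Fᵐ·H`, and since `t ∣ F` and `t ∣ H` the remainder
`Fⁿ·H` does not reach the coefficient of `tⁿ`. Hence `h_{n-1} = [tⁿ] H = Σ_{k=1}^{n} [tⁿ] Fᵏ`,
which is `B_n` of the sequence `g` shifted to start at index 1. -/

theorem eq_sum_Icc_pow_add_pow_mul {A : Type*} [Semiring A] {F H : A} (h : H = F + F * H)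
    (m : ℕ) : H = ∑ k ∈ Icc 1 m, F ^ k + F ^ m * H := by
  induction m with
  | zero => simp
  | succ m ih =>
    calc H = ∑ k ∈ Icc 1 m, F ^ k + F ^ m * (F + F * H) := by rw [← h, ← ih]
      _ = ∑ k ∈ Icc 1 (m + 1), F ^ k + F ^ (m + 1) * H := by
        rw [sum_Icc_succ_top (by omega), mul_add, ← mul_assoc, ← pow_succ, add_assoc]

namespace PowerSeries

theorem coeff_eq_sum_coeff_pow_of_eq_add_mul {A : Type*} [CommSemiring A] {F H : A⟦X⟧}
    (hF : X ∣ F) (hH : X ∣ H) (h : H = F + F * H) (n : ℕ) :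
    coeff n H = ∑ k ∈ Icc 1 n, coeff n (F ^ k) := by
  have hrem : coeff n (F ^ n * H) = 0 := by
    have hdvd : X ^ (n + 1) ∣ F ^ n * H :=
      pow_succ (X : A⟦X⟧) n ▸ mul_dvd_mul (pow_dvd_pow_of_dvd hF n) hH
    exact X_pow_dvd_iff.mp hdvd n n.lt_succ_self
  conv_lhs => rw [eq_sum_Icc_pow_add_pow_mul h n]
  rw [map_add, hrem, add_zero, map_sum]

theorem mk_shift_eq_X_mul {A : Type*} [Semiring A] (g : ℕ → A) :
    PowerSeries.mk (fun m => if m = 0 then 0 else g (m - 1)) = X * PowerSeries.mk g := by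
  ext (_ | m) <;> simp [coeff_succ_X_mul]

end PowerSeries

/-- If `h` is the Invert transform of `g`, i.e. the ordinary generating functions satisfy
`H = G / (1 - t·G)`, then `h n = B_{n+1}(g 0, g 1, …, g n)`. -/
theorem invert_transform_bell (g h : ℕ → R)
    (hinv : PowerSeries.mk h * (1 - PowerSeries.X * PowerSeries.mk g) = PowerSeries.mk g) :
    ∀ n : ℕ, h n = cBell (n + 1) (fun i => g (i - 1)) := by
  intro n
  have hrec : X * PowerSeries.mk h =
      X * PowerSeries.mk g + X * PowerSeries.mk g * (X * PowerSeries.mk h) := by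
    linear_combination X * hinv
  rw [← coeff_mk n h, ← coeff_succ_X_mul,
    coeff_eq_sum_coeff_pow_of_eq_add_mul (dvd_mul_right X _) (dvd_mul_right X _) hrec,
    cBell, if_neg n.succ_ne_zero]
  simp only [pBell, mk_shift_eq_X_mul]
end

section
/- The set B_R = {a ∈ H_R : a_0 = 1 and E(a) = a^{-1}}, where E is the alternating sign transform (E(a))_n = (-1)^n a_n, is a subgroup of the unit group of H_R under binomial convolution. -/
open Finset

variable {R : Type*} [CommRing R]

/-- The alternating sign transform. -/
def alt (a : ℕ → R) : ℕ → R := fun n => (-1) ^ n * a n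

/-- Membership in `B_R`: `a 0 = 1` and `E(a)` is the inverse of `a`. -/
def memBR (a : ℕ → R) : Prop := a 0 = 1 ∧ bconv a (alt a) = eseq

/-! `E` is an involutive multiplicative endomorphism of the commutative monoid `(H_R, ⋆, eseq)`.
Hence `E(a ⋆ b) = E(a) ⋆ E(b)` is inverse to `a ⋆ b` when `E(a)`, `E(b)` are inverse to `a`, `b`,
and `E(a)` has inverse `E(E(a)) = a`. -/

lemma bconv_apply_zero (a b : ℕ → R) : bconv a b 0 = a 0 * b 0 := by
  simp [bconv]

lemma bconv_comm (a b : ℕ → R) : bconv a b = bconv b a := by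
  funext n
  rw [bconv, ← sum_range_reflect]
  refine sum_congr rfl fun h hh => ?_
  have hh : h ≤ n := Nat.lt_succ_iff.mp (mem_range.mp hh)
  rw [add_tsub_cancel_right, Nat.choose_symm hh, Nat.sub_sub_self hh]
  ring

lemma bconv_eseq (a : ℕ → R) : bconv a eseq = a := by
  funext n
  rw [bconv, sum_eq_single_of_mem n (self_mem_range_succ n)]
  · simp [eseq]
  · intro h hh hne
    have : n - h ≠ 0 := by rw [mem_range] at hh; omega
    simp [eseq, this]

lemma bconv_assoc (a b c : ℕ → R) : bconv (bconv a b) c = bconv a (bconv b c) := by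
  funext n
  simp only [bconv, sum_mul, mul_sum, sum_sigma']
  refine sum_nbij' (fun p => ⟨p.2, p.1 - p.2⟩) (fun p => ⟨p.1 + p.2, p.1⟩) ?_ ?_ ?_ ?_ ?_
  · rintro ⟨h, i⟩ hp
    simp only [mem_sigma, mem_range] at hp ⊢
    omega
  · rintro ⟨i, j⟩ hp
    simp only [mem_sigma, mem_range] at hp ⊢
    omega
  · rintro ⟨h, i⟩ hp
    simp only [mem_sigma, mem_range] at hp
    simp [Nat.add_sub_cancel' (by omega : i ≤ h)]
  · rintro ⟨i, j⟩ -
    simp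
  · rintro ⟨h, i⟩ hp
    simp only [mem_sigma, mem_range] at hp
    -- `C(n,h) C(h,i) = C(n,i) C(n-i,h-i)`: both count the ways to split `n` into parts `i, h-i, n-h`
    have hchoose : (n.choose h : R) * h.choose i = n.choose i * (n - i).choose (h - i) := by
      rw [← Nat.cast_mul, ← Nat.cast_mul, Nat.choose_mul (by omega)]
    rw [show n - h = n - i - (h - i) by omega]
    linear_combination (a i * b (h - i) * c (n - i - (h - i))) * hchoose

lemma bconv_bconv_bconv_comm (a b c d : ℕ → R) :
    bconv (bconv a b) (bconv c d) = bconv (bconv a c) (bconv b d) := by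
  rw [bconv_assoc, ← bconv_assoc b, bconv_comm b c, bconv_assoc c, ← bconv_assoc]

lemma alt_apply_zero (a : ℕ → R) : alt a 0 = a 0 := by
  simp [alt]

lemma alt_alt (a : ℕ → R) : alt (alt a) = a := by
  funext n
  simp [alt, ← mul_assoc, ← mul_pow]

lemma alt_eseq : alt (eseq : ℕ → R) = eseq := by
  funext n
  rcases n with _ | n <;> simp [alt, eseq]

lemma alt_bconv (a b : ℕ → R) : alt (bconv a b) = bconv (alt a) (alt b) := by
  funext n
  rw [alt, bconv, bconv, mul_sum]
  refine sum_congr rfl fun h hh => ?_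
  have hh : h ≤ n := Nat.lt_succ_iff.mp (mem_range.mp hh)
  rw [alt, alt, ← Nat.add_sub_cancel' hh, pow_add, Nat.add_sub_cancel_left]
  ring

lemma memBR_eseq : memBR (eseq : ℕ → R) :=
  ⟨rfl, by rw [alt_eseq, bconv_eseq]⟩

lemma memBR.bconv {a b : ℕ → R} (ha : memBR a) (hb : memBR b) : memBR (bconv a b) :=
  ⟨by rw [bconv_apply_zero, ha.1, hb.1, one_mul],
    by rw [alt_bconv, bconv_bconv_bconv_comm, ha.2, hb.2, bconv_eseq]⟩

lemma memBR.alt {a : ℕ → R} (ha : memBR a) : memBR (alt a) :=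
  ⟨by rw [alt_apply_zero, ha.1], by rw [alt_alt, bconv_comm, ha.2]⟩

/-- `B_R = {a : a 0 = 1, E(a) = a⁻¹}` is a subgroup of the unit group of `H_R`:
it contains the identity, is closed under products, and the inverse `E(a)` of any
`a ∈ B_R` is again in `B_R`. -/
theorem BR_subgroup :
    memBR (eseq : ℕ → R) ∧
    (∀ a b : ℕ → R, memBR a → memBR b → memBR (bconv a b)) ∧
    (∀ a : ℕ → R, memBR a → memBR (alt a) ∧ bconv a (alt a) = eseq) :=
  ⟨memBR_eseq, fun _ _ ha hb => ha.bconv hb, fun _ ha => ⟨ha.alt, ha.2⟩⟩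
end
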